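/- Let S be a unital quantale and A, B, C elements (or matrices over S) with residuation x/y = sup { z | z * y ≤ x }. Define L₁ = (A* * B)/(C * A* * B). Then for every L, (A + L*C)* * B ≤ A* * B if and only if L ≤ L₁; in particular L₁ is the greatest L with (A + L₁*C)* * B = A* * B. -/

import Mathlib

/-!
Write `a*` for `⨆ n, aⁿ`. The key fact is the star induction rule: `a* b` is the least `x` with
`b ≤ x` and `a x ≤ x`. Hence `(A ⊔ L C)* B ≤ A* B` holds exactly when `A* B` is closed under
left multiplication by `L C` (the other summand `A` always keeps it closed), i.e. when
`L (C A* B) ≤ A* B`, which by residuation is `L ≤ L₁`. Equality for `L₁` follows since `A* B`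
is always below `(A ⊔ L₁ C)* B`.
-/

open Quantale

namespace Quantale

variable {S : Type*} [Monoid S] [CompleteLattice S]

def kstar (a : S) : S := ⨆ n : ℕ, a ^ n

theorem pow_le_kstar (a : S) (n : ℕ) : a ^ n ≤ kstar a :=
  le_iSup (fun n => a ^ n) n

variable [IsQuantale S]

theorem kstar_mono {a b : S} (h : a ≤ b) : kstar a ≤ kstar b :=
  iSup_le fun n => (pow_le_pow_left' h n).trans (pow_le_kstar b n)

theorem le_kstar_mul (a b : S) : b ≤ kstar a * b := by
  simpa using mul_le_mul_left (pow_le_kstar a 0) b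

theorem mul_kstar_mul_le (a b : S) : a * (kstar a * b) ≤ kstar a * b := by
  rw [kstar, iSup_mul_distrib, mul_iSup_distrib]
  refine iSup_le fun n => ?_
  rw [← mul_assoc, ← pow_succ']
  exact le_iSup (fun n => a ^ n * b) (n + 1)

theorem kstar_mul_le_of_mul_le {a b x : S} (hb : b ≤ x) (ha : a * x ≤ x) :
    kstar a * b ≤ x := by
  rw [kstar, iSup_mul_distrib]
  refine iSup_le fun n => ?_
  induction n with
  | zero => simpa using hb
  | succ n ih =>
    rw [pow_succ', mul_assoc]
    exact (mul_le_mul_right ih a).trans ha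

theorem kstar_sup_mul_le_iff (a l b : S) :
    kstar (a ⊔ l) * b ≤ kstar a * b ↔ l * (kstar a * b) ≤ kstar a * b := by
  constructor
  · intro h
    calc l * (kstar a * b) ≤ (a ⊔ l) * (kstar (a ⊔ l) * b) :=
          mul_le_mul' le_sup_right (mul_le_mul_left (kstar_mono le_sup_left) b)
      _ ≤ kstar (a ⊔ l) * b := mul_kstar_mul_le _ _
      _ ≤ kstar a * b := h
  · intro h
    refine kstar_mul_le_of_mul_le (le_kstar_mul a b) ?_
    rw [sup_mul_distrib]
    exact sup_le (mul_kstar_mul_le a b) h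

theorem kstar_mul_le_kstar_sup_mul (a l b : S) : kstar a * b ≤ kstar (a ⊔ l) * b :=
  mul_le_mul_left (kstar_mono le_sup_left) b

end Quantale

theorem observer_gain_L1 {S : Type*} [Monoid S] [CompleteLattice S] [IsQuantale S]
    (A B C : S) :
    letI star : S → S := fun a => ⨆ n : ℕ, a ^ n
    letI rdiv : S → S → S := fun x y => sSup {z : S | z * y ≤ x}
    letI L₁ : S := rdiv (star A * B) (C * (star A * B))
    (∀ L : S, star (A ⊔ L * C) * B ≤ star A * B ↔ L ≤ L₁) ∧
      star (A ⊔ L₁ * C) * B = star A * B := by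
  change (∀ L : S, kstar (A ⊔ L * C) * B ≤ kstar A * B ↔
      L ≤ (C * (kstar A * B)) ⇨ₗ (kstar A * B)) ∧
    kstar (A ⊔ ((C * (kstar A * B)) ⇨ₗ (kstar A * B)) * C) * B = kstar A * B
  have greatest : ∀ L : S, kstar (A ⊔ L * C) * B ≤ kstar A * B ↔
      L ≤ (C * (kstar A * B)) ⇨ₗ (kstar A * B) := fun L => by
    rw [kstar_sup_mul_le_iff, leftMulResiduation_le_iff_mul_le, mul_assoc]
  exact ⟨greatest, ((greatest _).mpr le_rfl).antisymm (kstar_mul_le_kstar_sup_mul _ _ _)⟩
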